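/- Let P be a zigzag poset with extrema {z_i | i ∈ Γ} and associated total order ⊑, and let I be a nonempty subset of P. Then the following are equivalent: (1) I is an interval in the poset P; (2) for all x, y, z ∈ P with x ⊑ y ⊑ z, if x ∈ I and z ∈ I then y ∈ I. -/

import Mathlib

universe u v w w'

/-- A persistence module indexed by a poset `P`, over a field `k`. -/
structure PersMod (k : Type u) [Field k] (P : Type v) [PartialOrder P] :
    Type (max u v (w + 1)) where
  space : P → Type w
  [acg : ∀ x, AddCommGroup (space x)]
  [mod : ∀ x, Module k (space x)]
  map : ∀ {x y : P}, x ≤ y → (space x →ₗ[k] space y)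
  map_id : ∀ x : P, map (le_refl x) = LinearMap.id
  map_comp : ∀ {x y z : P} (hxy : x ≤ y) (hyz : y ≤ z),
    (map hyz).comp (map hxy) = map (hxy.trans hyz)

attribute [instance] PersMod.acg PersMod.mod

variable (k : Type u) [Field k] {P : Type v} [PartialOrder P]

/-- A morphism of persistence modules (a natural transformation). -/
structure PersHom (V : PersMod.{u, v, w} k P) (W : PersMod.{u, v, w'} k P) where
  app : ∀ x : P, V.space x →ₗ[k] W.space x
  natural : ∀ {x y : P} (h : x ≤ y) (v : V.space x),
    app y (V.map h v) = W.map h (app x v)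

/-- An isomorphism of persistence modules. -/
structure PersIso (V : PersMod.{u, v, w} k P) (W : PersMod.{u, v, w'} k P) where
  app : ∀ x : P, V.space x ≃ₗ[k] W.space x
  natural : ∀ {x y : P} (h : x ≤ y) (v : V.space x),
    app y (V.map h v) = W.map h (app x v)

/-- A subset `I` of a poset is convex if `x ≤ y ≤ z`, `x ∈ I`, `z ∈ I` imply `y ∈ I`. -/
def IsConvexIn (I : Set P) : Prop :=
  ∀ ⦃x y z : P⦄, x ∈ I → z ∈ I → x ≤ y → y ≤ z → y ∈ I

/-- A subset `I` of a poset is connected if any two points of `I` are joined by a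
zigzag path inside `I`. -/
def IsConnectedIn (I : Set P) : Prop :=
  ∀ x ∈ I, ∀ z ∈ I, ∃ (n : ℕ) (c : ℕ → P), (∀ i ≤ n, c i ∈ I) ∧ c 0 = x ∧ c n = z ∧
    ∀ i < n, c i ≤ c (i + 1) ∨ c (i + 1) ≤ c i

/-- An interval in a poset: nonempty, convex and connected. -/
def IsPosetInterval (I : Set P) : Prop :=
  I.Nonempty ∧ IsConvexIn I ∧ IsConnectedIn I

open Classical in
/-- The subspace of `k` used as the value of the constant module at `x`. -/
noncomputable def constSub (I : Set P) (x : P) : Submodule k k :=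
  if x ∈ I then ⊤ else ⊥

open Classical in
/-- The structure map of the constant module. -/
noncomputable def constMap (I : Set P) (x y : P) :
    constSub k I x →ₗ[k] constSub k I y :=
  LinearMap.codRestrict (constSub k I y)
    ((if y ∈ I then (LinearMap.id : k →ₗ[k] k) else 0).comp (constSub k I x).subtype)
    (fun c => by
      by_cases hy : y ∈ I
      · simp [constSub, hy]
      · rw [constSub, if_neg hy, if_neg hy]
        exact (Submodule.mem_bot k).2 (by simp))

open Classical in
/-- The constant (interval) module `M(I)` attached to a convex subset `I`. -/
noncomputable def constMod (I : Set P) (hI : IsConvexIn I) : PersMod.{u, v, u} k P where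
  space x := constSub k I x
  map {x y} _ := constMap k I x y
  map_id := fun x => by
    ext c
    by_cases hx : x ∈ I
    · simp [constMap, hx]
    · have hc : (c : k) = 0 := by
        have h2 : constSub k I x = ⊥ := if_neg hx
        have key : ∀ v : k, v ∈ constSub k I x → v = 0 := by
          intro v hv
          rw [h2] at hv
          exact (Submodule.mem_bot k).1 hv
        exact key _ c.2
      simp [constMap, hx, hc]
  map_comp := fun {x y z} hxy hyz => by
    ext c
    by_cases hz : z ∈ I
    · by_cases hy : y ∈ I
      · simp [constMap, hy, hz]
      · have hx : x ∉ I := fun hx => hy (hI hx hz hxy hyz)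
        have hc : (c : k) = 0 := by
          have h2 : constSub k I x = ⊥ := if_neg hx
          have key : ∀ v : k, v ∈ constSub k I x → v = 0 := by
            intro v hv
            rw [h2] at hv
            exact (Submodule.mem_bot k).1 hv
          exact key _ c.2
        simp [constMap, hy, hz, hc]
    · simp [constMap, hz]

/-- A submodule of a persistence module: a family of subspaces preserved by the
structure maps. -/
structure PersSubmod (V : PersMod.{u, v, w} k P) where
  carrier : ∀ x : P, Submodule k (V.space x)
  mapLe : ∀ {x y : P} (h : x ≤ y), ∀ v ∈ carrier x, V.map h v ∈ carrier y

/-- A submodule of a persistence module, viewed as a persistence module in its own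
right. -/
def PersSubmod.toPersMod {V : PersMod.{u, v, w} k P} (U : PersSubmod k V) :
    PersMod.{u, v, w} k P where
  space x := U.carrier x
  map {x y} h := (V.map h).restrict (U.mapLe h)
  map_id := fun x => by
    ext c
    simp [LinearMap.restrict_apply, V.map_id]
  map_comp := fun {x y z} hxy hyz => by
    ext c
    have := LinearMap.congr_fun (V.map_comp hxy hyz) (c : V.space x)
    simpa [LinearMap.restrict_apply] using this

/-- A persistence module is an interval module if it is isomorphic to a constant
module `M(I)` for some interval `I`. -/
def IsIntervalModule (V : PersMod.{u, v, w} k P) : Prop :=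
  ∃ (I : Set P) (hI : IsPosetInterval I), Nonempty (PersIso k V (constMod k I hI.2.1))

/-- `A` is an internal direct sum decomposition of `V`:
at each point the subspaces are independent and span everything. -/
def IsDecomp (V : PersMod.{u, v, w} k P) (A : Set (PersSubmod k V)) : Prop :=
  ∀ x : P, iSupIndep (fun U : A => (U : PersSubmod k V).carrier x) ∧
    ⨆ U : A, (U : PersSubmod k V).carrier x = ⊤

/-- An interval decomposition of `V`. -/
def IsIntervalDecomp (V : PersMod.{u, v, w} k P) (A : Set (PersSubmod k V)) : Prop :=
  IsDecomp k V A ∧ ∀ U ∈ A, IsIntervalModule k U.toPersMod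

/-- `V` has an interval decomposition. -/
def HasIntervalDecomp (V : PersMod.{u, v, w} k P) : Prop :=
  ∃ A : Set (PersSubmod k V), IsIntervalDecomp k V A

/-- `P` is a zigzag poset with extrema `z i` (`i ∈ Γ ⊆ ℤ`) and associated total
order `sq` (`⊑`): `sq` is a total order on the underlying set of `P` such that
(1) `i < j` in `Γ` implies `z i ⊏ z j`; (2) any pair `x ≤ y` in `P` lies between two
consecutive extrema with respect to `⊑`; (3) between consecutive extrema, the partial
order of `P` agrees with `⊑` or with its reverse, alternating with the parity of the
index. -/
def IsZigzagWith {P : Type v} [PartialOrder P] (Γ : Set ℤ) (z : ℤ → P)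
    (sq : P → P → Prop) : Prop :=
  IsLinearOrder P sq ∧
  (∀ i ∈ Γ, ∀ j ∈ Γ, i < j → sq (z i) (z j) ∧ z i ≠ z j) ∧
  (∀ x y : P, x ≤ y → ∃ i : ℤ, i ∈ Γ ∧ i + 1 ∈ Γ ∧
    sq (z i) x ∧ sq x (z (i + 1)) ∧ sq (z i) y ∧ sq y (z (i + 1))) ∧
  ((∀ i : ℤ, i ∈ Γ → i + 1 ∈ Γ → ∀ x y : P,
      sq (z i) x → sq x y → sq y (z (i + 1)) →
      (Odd i → x ≤ y) ∧ (Even i → y ≤ x)) ∨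
   (∀ i : ℤ, i ∈ Γ → i + 1 ∈ Γ → ∀ x y : P,
      sq (z i) x → sq x y → sq y (z (i + 1)) →
      (Odd i → y ≤ x) ∧ (Even i → x ≤ y)))

/-- `P` is a zigzag poset with extrema `z i`, `i ∈ Γ`. -/
def IsZigzag {P : Type v} [PartialOrder P] (Γ : Set ℤ) (z : ℤ → P) : Prop :=
  ∃ sq : P → P → Prop, IsZigzagWith Γ z sq

/-- The restriction of a persistence module to a full subposet. -/
def restrictMod {P : Type v} [PartialOrder P] (V : PersMod.{u, v, w} k P)
    (S : Set P) : PersMod.{u, v, w} k S where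
  space x := V.space x.1
  map {_ _} h := V.map (Subtype.coe_le_coe.mpr h)
  map_id := fun x => V.map_id x.1
  map_comp := fun h1 h2 => V.map_comp (Subtype.coe_le_coe.mpr h1) (Subtype.coe_le_coe.mpr h2)

/-! Between two consecutive extrema the order of `P` is `⊑` or its reverse, and every
comparable pair lies in one such block; hence whatever is `⊑`-between two comparable points
`a ≤ b` is `≤`-between them. So a convex set contains everything `⊑`-between the two ends of
each step of a zigzag path, hence everything `⊑`-between any two of its points. Conversely a
`⊑`-convex set is convex by the same fact, and it is connected: two of its points `x ⊑ w`
are joined through the extrema `⊑`-between them, consecutive extrema being comparable. -/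

section Between

variable {α : Type*} {r : α → α → Prop}

def IsConvexFor (r : α → α → Prop) (I : Set α) : Prop :=
  ∀ x y w : α, r x y → r y w → x ∈ I → w ∈ I → y ∈ I

def IsBetween (r : α → α → Prop) (a t b : α) : Prop :=
  r a t ∧ r t b ∨ r b t ∧ r t a

theorem isBetween_comm {a t b : α} : IsBetween r a t b ↔ IsBetween r b t a :=
  Or.comm

-- Only totality is used: every orientation of a triangle has a vertex with one edge in
-- and one edge out.
theorem isBetween_or_isBetween_or_isBetween [Std.Total r] (a b c : α) :
    IsBetween r a b c ∨ IsBetween r b a c ∨ IsBetween r a c b := by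
  unfold IsBetween
  rcases total_of r a b with h₁ | h₁ <;> rcases total_of r b c with h₂ | h₂ <;>
    rcases total_of r a c with h₃ | h₃ <;> tauto

theorem IsConvexFor.mem_of_isBetween {I : Set α} (hI : IsConvexFor r I) {x y w : α}
    (hy : IsBetween r x y w) (hx : x ∈ I) (hw : w ∈ I) : y ∈ I := by
  rcases hy with ⟨hxy, hyw⟩ | ⟨hwy, hyx⟩
  exacts [hI x y w hxy hyw hx hw, hI w y x hwy hyx hw hx]

end Between

section ComparabilityPath

variable {I : Set P}

def ComparableIn (I : Set P) (a b : P) : Prop :=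
  a ∈ I ∧ b ∈ I ∧ (a ≤ b ∨ b ≤ a)

instance : Std.Symm (ComparableIn I) :=
  ⟨fun _ _ ⟨ha, hb, hab⟩ => ⟨hb, ha, hab.symm⟩⟩

theorem isConnectedIn_iff_reflTransGen :
    IsConnectedIn I ↔ ∀ x ∈ I, ∀ w ∈ I, Relation.ReflTransGen (ComparableIn I) x w := by
  constructor
  · intro hI x hx w hw
    obtain ⟨n, c, hc, rfl, rfl, hstep⟩ := hI x hx w hw
    suffices ∀ m ≤ n, Relation.ReflTransGen (ComparableIn I) (c 0) (c m) from this n le_rfl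
    intro m hm
    induction m with
    | zero => exact .refl
    | succ m ih =>
      exact (ih (by omega)).tail ⟨hc m (by omega), hc (m + 1) hm, hstep m (by omega)⟩
  · intro hI x hx w hw
    have hxw := hI x hx w hw
    clear hw
    induction hxw with
    | refl => exact ⟨0, fun _ => x, fun _ _ => hx, rfl, rfl, by simp⟩
    | @tail b d _ hbd ih =>
      obtain ⟨n, c, hc, hc₀, hcn, hstep⟩ := ih
      refine ⟨n + 1, fun i => if i ≤ n then c i else d, fun i _ => ?_, by simpa using hc₀,
        by simp, fun i hi => ?_⟩
      · dsimp only
        split_ifs with hin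
        exacts [hc i hin, hbd.2.1]
      · rcases Nat.lt_succ_iff_lt_or_eq.1 hi with hi | rfl
        · simpa [hi.le, Nat.succ_le_of_lt hi] using hstep i hi
        · simpa [hcn] using hbd.2.2

end ComparabilityPath

namespace IsZigzagWith

variable {Γ : Set ℤ} {z : ℤ → P} {sq : P → P → Prop} {I : Set P}

theorem le_on_block_or_ge_on_block (h : IsZigzagWith Γ z sq) {i : ℤ} (hi : i ∈ Γ)
    (hi₁ : i + 1 ∈ Γ) :
    (∀ u v, sq (z i) u → sq u v → sq v (z (i + 1)) → u ≤ v) ∨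
      (∀ u v, sq (z i) u → sq u v → sq v (z (i + 1)) → v ≤ u) := by
  rcases h.2.2.2 with hp | hp <;> rcases Int.even_or_odd i with he | he
  · exact .inr fun u v h₁ h₂ h₃ => (hp i hi hi₁ u v h₁ h₂ h₃).2 he
  · exact .inl fun u v h₁ h₂ h₃ => (hp i hi hi₁ u v h₁ h₂ h₃).1 he
  · exact .inl fun u v h₁ h₂ h₃ => (hp i hi hi₁ u v h₁ h₂ h₃).2 he
  · exact .inr fun u v h₁ h₂ h₃ => (hp i hi hi₁ u v h₁ h₂ h₃).1 he

theorem comparable_of_mem_block (h : IsZigzagWith Γ z sq) {i : ℤ} (hi : i ∈ Γ)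
    (hi₁ : i + 1 ∈ Γ) {u v : P} (hu : sq (z i) u) (hu' : sq u (z (i + 1)))
    (hv : sq (z i) v) (hv' : sq v (z (i + 1))) : u ≤ v ∨ v ≤ u := by
  have := h.1
  rcases total_of sq u v with huv | hvu <;>
    rcases h.le_on_block_or_ge_on_block hi hi₁ with hk | hk
  · exact .inl (hk u v hu huv hv')
  · exact .inr (hk u v hu huv hv')
  · exact .inr (hk v u hv hvu hu')
  · exact .inl (hk v u hv hvu hu')

theorem sq_extrema (h : IsZigzagWith Γ z sq) {i j : ℤ} (hi : i ∈ Γ) (hj : j ∈ Γ)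
    (hij : i ≤ j) : sq (z i) (z j) := by
  have := h.1
  rcases hij.eq_or_lt with rfl | hlt
  exacts [refl_of sq _, (h.2.1 i hi j hj hlt).1]

-- If the block of `a ≤ b` is reversed, then `b ≤ t ≤ a` forces `a = t = b`.
theorem le_between (h : IsZigzagWith Γ z sq) {a b t : P} (hab : a ≤ b)
    (ht : IsBetween sq a t b) : a ≤ t ∧ t ≤ b := by
  have := h.1
  obtain ⟨i, hi, hi₁, hza, haz, hzb, hbz⟩ := h.2.2.1 a b hab
  have hzt : sq (z i) t := ht.elim (fun ht => trans_of sq hza ht.1) (trans_of sq hzb ·.1)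
  have htz : sq t (z (i + 1)) := ht.elim (trans_of sq ·.2 hbz) (trans_of sq ·.2 haz)
  rcases h.le_on_block_or_ge_on_block hi hi₁ with hk | hk <;> rcases ht with ⟨h₁, h₂⟩ | ⟨h₁, h₂⟩
  · exact ⟨hk a t hza h₁ htz, hk t b hzt h₂ hbz⟩
  · exact ⟨hab.trans (hk b t hzb h₁ htz), (hk t a hzt h₂ haz).trans hab⟩
  · exact ⟨hab.trans (hk t b hzt h₂ hbz), (hk a t hza h₁ htz).trans hab⟩
  · exact ⟨hk t a hzt h₂ haz, hk b t hzb h₁ htz⟩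

theorem mem_of_comparableIn (h : IsZigzagWith Γ z sq) (hI : IsConvexIn I) {a b t : P}
    (hab : ComparableIn I a b) (ht : IsBetween sq a t b) : t ∈ I := by
  obtain ⟨ha, hb, hab | hba⟩ := hab
  · obtain ⟨hat, htb⟩ := h.le_between hab ht
    exact hI ha hb hat htb
  · obtain ⟨hbt, hta⟩ := h.le_between hba (isBetween_comm.1 ht)
    exact hI hb ha hbt hta

theorem mem_of_reflTransGen (h : IsZigzagWith Γ z sq) (hI : IsConvexIn I) {x w t : P}
    (hxw : Relation.ReflTransGen (ComparableIn I) x w) (hx : x ∈ I) (hxt : sq x t)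
    (htw : sq t w) : t ∈ I := by
  have := h.1
  induction hxw generalizing t with
  | refl => rwa [antisymm_of sq htw hxt]
  | @tail b d _ hbd ih =>
    rcases total_of sq t b with htb | hbt
    · exact ih hxt htb
    · exact h.mem_of_comparableIn hI hbd (.inl ⟨hbt, htw⟩)

theorem isConvexFor_of_isConvexIn (h : IsZigzagWith Γ z sq) (hconv : IsConvexIn I)
    (hconn : IsConnectedIn I) : IsConvexFor sq I := fun x _ w hxy hyw hx hw =>
  h.mem_of_reflTransGen hconv (isConnectedIn_iff_reflTransGen.1 hconn x hx w hw) hx hxy hyw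

-- Among `x ≤ y ≤ w`, if `y` is not `⊑`-between the other two, then `le_between` squeezes it
-- onto one of them.
theorem isConvexIn_of_isConvexFor (h : IsZigzagWith Γ z sq) (hI : IsConvexFor sq I) :
    IsConvexIn I := by
  have := h.1
  intro x y w hx hw hxy hyw
  rcases isBetween_or_isBetween_or_isBetween (r := sq) x y w with hy | hx' | hw'
  · exact hI.mem_of_isBetween hy hx hw
  · rwa [le_antisymm (h.le_between hyw hx').1 hxy]
  · rwa [le_antisymm hyw (h.le_between hxy hw').2]

theorem reflTransGen_of_isConvexFor (h : IsZigzagWith Γ z sq) (hΓ : Γ.OrdConnected)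
    (hI : IsConvexFor sq I) {x w : P} (hx : x ∈ I) (hw : w ∈ I) (hxw : sq x w) :
    Relation.ReflTransGen (ComparableIn I) x w := by
  have := h.1
  obtain ⟨i, hi, hi₁, hzx, hxz, -, -⟩ := h.2.2.1 x x le_rfl
  obtain ⟨j, hj, hj₁, hzw, hwz, -, -⟩ := h.2.2.1 w w le_rfl
  rcases le_or_gt j i with hji | hij
  · have hwz' : sq w (z (i + 1)) := trans_of sq hwz (h.sq_extrema hj₁ hi₁ (by omega))
    exact .single ⟨hx, hw, h.comparable_of_mem_block hi hi₁ hzx hxz (trans_of sq hzx hxw) hwz'⟩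
  have hzI : ∀ k, i + 1 ≤ k → k ≤ j → k ∈ Γ ∧ z k ∈ I := fun k hk hk' =>
    have hkΓ : k ∈ Γ := hΓ.out hi hj ⟨by omega, hk'⟩
    ⟨hkΓ, hI x (z k) w (trans_of sq hxz (h.sq_extrema hi₁ hkΓ hk))
      (trans_of sq (h.sq_extrema hkΓ hj hk') hzw) hx hw⟩
  have hchain : Relation.ReflTransGen (ComparableIn I) (z (i + 1)) (z j) := by
    refine (reflTransGen_of_succ_of_le (fun k l => ComparableIn I (z k) (z l)) (fun k hk => ?_)
      (by omega : i + 1 ≤ j)).lift z fun _ _ => id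
    obtain ⟨hk, hk'⟩ := hk
    rw [Order.succ_eq_add_one]
    obtain ⟨hkΓ, hkI⟩ := hzI k hk hk'.le
    obtain ⟨hk₁Γ, hk₁I⟩ := hzI (k + 1) (by omega) hk'
    exact ⟨hkI, hk₁I, h.comparable_of_mem_block hkΓ hk₁Γ (refl_of sq _)
      (h.sq_extrema hkΓ hk₁Γ (by omega)) (h.sq_extrema hkΓ hk₁Γ (by omega)) (refl_of sq _)⟩
  obtain ⟨-, hziI⟩ := hzI (i + 1) le_rfl (by omega)
  obtain ⟨-, hzjI⟩ := hzI j (by omega) le_rfl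
  have hfirst : x ≤ z (i + 1) ∨ z (i + 1) ≤ x :=
    h.comparable_of_mem_block hi hi₁ hzx hxz (h.sq_extrema hi hi₁ (by omega)) (refl_of sq _)
  have hlast : z j ≤ w ∨ w ≤ z j :=
    h.comparable_of_mem_block hj hj₁ (refl_of sq _) (h.sq_extrema hj hj₁ (by omega)) hzw hwz
  exact ((Relation.ReflTransGen.single ⟨hx, hziI, hfirst⟩).trans hchain).tail ⟨hzjI, hw, hlast⟩

theorem isConnectedIn_of_isConvexFor (h : IsZigzagWith Γ z sq) (hΓ : Γ.OrdConnected)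
    (hI : IsConvexFor sq I) : IsConnectedIn I := by
  have := h.1
  refine isConnectedIn_iff_reflTransGen.2 fun x hx w hw => ?_
  rcases total_of sq x w with hxw | hwx
  · exact h.reflTransGen_of_isConvexFor hΓ hI hx hw hxw
  · exact Std.Symm.symm _ _ (h.reflTransGen_of_isConvexFor hΓ hI hw hx hwx)

end IsZigzagWith

/-- Characterisation of intervals in a zigzag poset: a nonempty subset `I` is an
interval in `P` if and only if it is convex with respect to the associated total
order `⊑`. -/
theorem zigzag_interval_iff (P : Type v) [PartialOrder P]
    (Γ : Set ℤ) (z : ℤ → P) (sq : P → P → Prop)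
    (hΓ : (∃ n : ℤ, 2 ≤ n ∧ Γ = Set.Icc 1 n) ∨ Γ = {i : ℤ | 0 ≤ i} ∨ Γ = Set.univ)
    (hzz : IsZigzagWith Γ z sq)
    (I : Set P) (hne : I.Nonempty) :
    IsPosetInterval I ↔
      ∀ x y w : P, sq x y → sq y w → x ∈ I → w ∈ I → y ∈ I := by
  have hΓ' : Γ.OrdConnected := by
    rcases hΓ with ⟨n, -, rfl⟩ | rfl | rfl
    exacts [Set.ordConnected_Icc, Set.ordConnected_Ici, Set.ordConnected_univ]
  change IsPosetInterval I ↔ IsConvexFor sq I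
  constructor
  · rintro ⟨-, hconv, hconn⟩
    exact hzz.isConvexFor_of_isConvexIn hconv hconn
  · intro hI
    exact ⟨hne, hzz.isConvexIn_of_isConvexFor hI, hzz.isConnectedIn_of_isConvexFor hΓ' hI⟩
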